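/- Let 1 ≤ p < 3, X ∈ V^p([0,T], R^d), and F ∈ C²(R^d, R) with D²F being α-Hölder continuous for some α > max{p−2, 0}. Then the Stratonovich integral ∫_0^T DF(X_t) ∘ dX_t := lim_{|π|→0} Σ_{[s,t]∈π} ⟨DF(X_s) + ½(DF(X_t)−DF(X_s)), X_t−X_s⟩ exists and equals F(X_T) − F(X_0). -/

import Mathlib

open Finset Filter Topology

/-- A partition of `[a,b]` given by finitely many monotone grid points. -/
structure GridPartition (a b : ℝ) where
  n : ℕ
  t : Fin (n + 1) → ℝ
  mono : Monotone t
  first : t 0 = a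
  last : t (Fin.last n) = b

namespace GridPartition

variable {a b : ℝ}

/-- The mesh of a partition: the largest interval length. -/
noncomputable def mesh (π : GridPartition a b) : ℝ :=
  ⨆ i : Fin π.n, (π.t i.succ - π.t i.castSucc)

/-- The Riemann-type sum `∑_{[s,t] ∈ π} F s t` over the intervals of a partition. -/
def rsum {E : Type*} [AddCommMonoid E] (π : GridPartition a b) (F : ℝ → ℝ → E) : E :=
  ∑ i : Fin π.n, F (π.t i.castSucc) (π.t i.succ)

end GridPartition

/-- `RiemannLimit a b F L`: the Riemann-type sums of `F` over partitions of `[a,b]`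
converge to `L` as the mesh tends to `0`. -/
def RiemannLimit {E : Type*} [SeminormedAddCommGroup E] (a b : ℝ) (F : ℝ → ℝ → E)
    (L : E) : Prop :=
  ∀ ε > 0, ∃ δ > 0, ∀ π : GridPartition a b, π.mesh < δ → ‖π.rsum F - L‖ < ε

/-- `X` has finite `p`-variation on `[a,b]` (boundedness of the partition sums). -/
def FinitePVar {E : Type*} [SeminormedAddCommGroup E] (p a b : ℝ) (X : ℝ → E) : Prop :=
  ∃ M : ℝ, ∀ π : GridPartition a b,
    (∑ i : Fin π.n, ‖X (π.t i.succ) - X (π.t i.castSucc)‖ ^ p) ≤ M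

/-- `X ∈ 𝒱^p([a,b])`: continuous and of finite `p`-variation. -/
def MemVp {E : Type*} [SeminormedAddCommGroup E] (p a b : ℝ) (X : ℝ → E) : Prop :=
  ContinuousOn X (Set.Icc a b) ∧ FinitePVar p a b X

/-- Finite `r`-variation for a two-parameter (remainder) function. -/
def FiniteRVar2 {E : Type*} [SeminormedAddCommGroup E] (r a b : ℝ) (R : ℝ → ℝ → E) : Prop :=
  ∃ M : ℝ, ∀ π : GridPartition a b,
    (∑ i : Fin π.n, ‖R (π.t i.castSucc) (π.t i.succ)‖ ^ r) ≤ M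

/-- Euclidean inner product on `Fin d → ℝ`. -/
def dot {d : ℕ} (x y : Fin d → ℝ) : ℝ := ∑ i, x i * y i

/-- Matrix-vector multiplication. -/
def mulVec' {d : ℕ} (M : Fin d → Fin d → ℝ) (v : Fin d → ℝ) : Fin d → ℝ :=
  fun i => ∑ j, M i j * v j

/-- `Y` is controlled by `X` with Gubinelli derivative `Y'` (vector case). -/
def Controlled {d : ℕ} (q r a b : ℝ) (X Y : ℝ → Fin d → ℝ)
    (Y' : ℝ → Fin d → Fin d → ℝ) : Prop :=
  MemVp q a b Y' ∧
    FiniteRVar2 r a b (fun s t => Y t - Y s - mulVec' (Y' s) (X t - X s))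

/-- `Y` is controlled by `X` with Gubinelli derivative `Y'` (scalar case). -/
def Controlled1 (q r a b : ℝ) (X Y Y' : ℝ → ℝ) : Prop :=
  MemVp q a b Y' ∧
    FiniteRVar2 r a b (fun s t => Y t - Y s - Y' s * (X t - X s))

/-- A control function on the simplex `Δ_T`. -/
def IsControlFun (T : ℝ) (ω : ℝ → ℝ → ℝ) : Prop :=
  ContinuousOn (fun z : ℝ × ℝ => ω z.1 z.2)
      {z : ℝ × ℝ | 0 ≤ z.1 ∧ z.1 ≤ z.2 ∧ z.2 ≤ T} ∧
    (∀ s ∈ Set.Icc (0 : ℝ) T, ω s s = 0) ∧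
    (∀ s t : ℝ, 0 ≤ s → s ≤ t → t ≤ T → 0 ≤ ω s t) ∧
    (∀ s u t : ℝ, 0 ≤ s → s ≤ u → u ≤ t → t ≤ T → ω s u + ω u t ≤ ω s t)

/-- An increasing (refining) sequence of partitions with mesh tending to zero. -/
def IncreasingSeq {T : ℝ} (π : ℕ → GridPartition 0 T) : Prop :=
  (∀ n, Set.range (π n).t ⊆ Set.range (π (n + 1)).t) ∧
    Tendsto (fun n => (π n).mesh) atTop (𝓝 0)

/-- `f` has quadratic variation `Q` along the partition sequence `π` in the sense
of Föllmer. -/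
def HasQV {T : ℝ} (π : ℕ → GridPartition 0 T) (f : ℝ → ℝ) (Q : ℝ → ℝ) : Prop :=
  ContinuousOn Q (Set.Icc 0 T) ∧
    ∀ u ∈ Set.Icc (0 : ℝ) T,
      Tendsto (fun n => ∑ i : Fin (π n).n,
          (f (min ((π n).t i.succ) u) - f (min ((π n).t i.castSucc) u)) ^ 2)
        atTop (𝓝 (Q u))

/-! The Stratonovich sum is, chord by chord, the trapezoid rule for `r ↦ F (X_s + r (X_t - X_s))`
on `[0, 1]`. Since `D²F` is `α`-Hölder, the trapezoid error on `[s, t]` is `O(|X_t - X_s|^(2+α))`,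
and `2 + α > p`, so the errors over a partition sum to at most `(max |X_t - X_s|)^(2+α-p)` times the
`p`-variation of `X`, which vanishes with the mesh by uniform continuity of `X`. The Stratonovich
sums therefore have the same limit as the telescoping sums of `F (X_t) - F (X_s)`. -/

open Set

theorem Fin.sum_univ_succ_sub_castSucc {E : Type*} [AddCommGroup E] :
    ∀ {n : ℕ} (f : Fin (n + 1) → E), ∑ i : Fin n, (f i.succ - f i.castSucc) = f (Fin.last n) - f 0
  | 0, _ => by simp
  | n + 1, f => by
    rw [Fin.sum_univ_castSucc]
    simp only [Fin.succ_castSucc]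
    rw [Fin.sum_univ_succ_sub_castSucc (fun j => f j.castSucc), Fin.succ_last, Fin.castSucc_zero]
    abel

namespace GridPartition

variable {a b : ℝ} (π : GridPartition a b)

theorem t_mem_Icc (j : Fin (π.n + 1)) : π.t j ∈ Icc a b :=
  ⟨π.first.symm.trans_le (π.mono (Fin.zero_le j)), (π.mono (Fin.le_last j)).trans_eq π.last⟩

theorem sub_le_mesh (i : Fin π.n) : π.t i.succ - π.t i.castSucc ≤ π.mesh :=
  le_ciSup (f := fun i : Fin π.n => π.t i.succ - π.t i.castSucc) (finite_range _).bddAbove i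

theorem rsum_sub {E : Type*} [AddCommGroup E] (G : ℝ → E) :
    π.rsum (fun s t => G t - G s) = G b - G a := by
  rw [rsum, Fin.sum_univ_succ_sub_castSucc (fun j => G (π.t j)), π.first, π.last]

end GridPartition

theorem ContinuousOn.exists_norm_increment_le_of_mesh_lt {E : Type*} [SeminormedAddCommGroup E]
    {a b : ℝ} {X : ℝ → E} (hX : ContinuousOn X (Icc a b)) {η : ℝ} (hη : 0 < η) :
    ∃ δ > 0, ∀ π : GridPartition a b, π.mesh < δ →
      ∀ i : Fin π.n, ‖X (π.t i.succ) - X (π.t i.castSucc)‖ ≤ η := by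
  obtain ⟨δ, hδ, hXδ⟩ :=
    Metric.uniformContinuousOn_iff.mp (isCompact_Icc.uniformContinuousOn_of_continuous hX) η hη
  refine ⟨δ, hδ, fun π hπ i => ?_⟩
  have hdist : dist (π.t i.succ) (π.t i.castSucc) < δ := by
    rw [Real.dist_eq, abs_of_nonneg (sub_nonneg.mpr (π.mono (Fin.castSucc_le_succ i)))]
    exact (π.sub_le_mesh i).trans_lt hπ
  rw [← dist_eq_norm]
  exact (hXδ _ (π.t_mem_Icc _) _ (π.t_mem_Icc _) hdist).le

theorem Real.rpow_le_rpow_sub_mul_rpow {r η p γ : ℝ} (hr : 0 ≤ r) (hrη : r ≤ η) (hpγ : p < γ)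
    (hγ : 0 < γ) : r ^ γ ≤ η ^ (γ - p) * r ^ p := by
  calc r ^ γ = r ^ (γ - p) * r ^ p := by
        rw [← Real.rpow_add' hr (by simpa using hγ.ne'), sub_add_cancel]
    _ ≤ η ^ (γ - p) * r ^ p := by gcongr

theorem RiemannLimit.of_sub_increment {E : Type*} [SeminormedAddCommGroup E] {a b : ℝ}
    {R : ℝ → ℝ → E} {G : ℝ → E} (h : RiemannLimit a b (fun s t => R s t - (G t - G s)) 0) :
    RiemannLimit a b R (G b - G a) := by
  intro ε hε
  obtain ⟨δ, hδ, hR⟩ := h ε hε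
  refine ⟨δ, hδ, fun π hπ => ?_⟩
  have hsplit : π.rsum (fun s t => R s t - (G t - G s)) = π.rsum R - (G b - G a) := by
    rw [← π.rsum_sub G]
    exact Finset.sum_sub_distrib _ _
  simpa [hsplit] using hR π hπ

theorem MemVp.riemannLimit_zero_of_norm_le_rpow {E G : Type*} [SeminormedAddCommGroup E]
    [SeminormedAddCommGroup G] {p γ K a b : ℝ} {X : ℝ → E} {R : ℝ → ℝ → G}
    (hX : MemVp p a b X) (hpγ : p < γ) (hγ : 0 < γ) (hK : 0 ≤ K)
    (hR : ∀ s t, ‖R s t‖ ≤ K * ‖X t - X s‖ ^ γ) : RiemannLimit a b R 0 := by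
  intro ε hε
  obtain ⟨hXc, M, hM⟩ := hX
  set M' := max M 0
  have hden : 0 < K * M' + 1 := by positivity
  have hβ : 0 < γ - p := sub_pos.mpr hpγ
  -- `η` is chosen so that `K * η ^ (γ - p) * M' < ε`.
  set η := (ε / (K * M' + 1)) ^ (γ - p)⁻¹
  have hη : 0 < η := Real.rpow_pos_of_pos (div_pos hε hden) _
  have hηβ : η ^ (γ - p) = ε / (K * M' + 1) :=
    Real.rpow_inv_rpow (div_pos hε hden).le hβ.ne'
  obtain ⟨δ, hδ, hsmall⟩ := hXc.exists_norm_increment_le_of_mesh_lt hη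
  refine ⟨δ, hδ, fun π hπ => ?_⟩
  calc ‖π.rsum R - 0‖ ≤ ∑ i : Fin π.n, ‖R (π.t i.castSucc) (π.t i.succ)‖ := by
        rw [sub_zero]
        exact norm_sum_le _ _
    _ ≤ ∑ i : Fin π.n, K * η ^ (γ - p) * ‖X (π.t i.succ) - X (π.t i.castSucc)‖ ^ p := by
        gcongr with i
        rw [mul_assoc]
        exact (hR _ _).trans (mul_le_mul_of_nonneg_left
          (Real.rpow_le_rpow_sub_mul_rpow (norm_nonneg _) (hsmall π hπ i) hpγ hγ) hK)
    _ = K * η ^ (γ - p) * ∑ i : Fin π.n, ‖X (π.t i.succ) - X (π.t i.castSucc)‖ ^ p :=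
        (Finset.mul_sum _ _ _).symm
    _ ≤ K * η ^ (γ - p) * M' := by
        gcongr
        exact (hM π).trans (le_max_left _ _)
    _ = K * M' / (K * M' + 1) * ε := by
        rw [hηβ]
        ring
    _ < ε := by
        rw [div_mul_eq_mul_div, div_lt_iff₀ hden]
        nlinarith

section Trapezoid

variable {G : Type*} [NormedAddCommGroup G] [NormedSpace ℝ G]

theorem norm_sub_sub_smul_le_of_hasDerivAt {f f' : ℝ → G} {L u : ℝ}
    (hf : ∀ s, HasDerivAt f (f' s) s)
    (hosc : ∀ s ∈ Icc (0 : ℝ) 1, ∀ r ∈ Icc (0 : ℝ) 1, ‖f' s - f' r‖ ≤ L)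
    (hu : u ∈ Icc (0 : ℝ) 1) : ‖f u - f 0 - u • f' u‖ ≤ L * u := by
  have hmvt := Convex.norm_image_sub_le_of_norm_hasDerivWithin_le
    (f := fun s => f s - s • f' u) (f' := fun s => f' s - f' u)
    (fun s _ => ((hf s).sub ((hasDerivAt_id s).smul_const (f' u))).hasDerivWithinAt.congr_deriv
      (by simp)) (fun s hs => hosc s hs u hu) (convex_Icc 0 1) (left_mem_Icc.mpr zero_le_one) hu
  rw [sub_zero, Real.norm_of_nonneg hu.1, zero_smul, sub_zero] at hmvt
  rwa [sub_right_comm]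

theorem norm_trapezoid_sub_le {g g' g'' : ℝ → G} {L : ℝ} (hg : ∀ s, HasDerivAt g (g' s) s)
    (hg' : ∀ s, HasDerivAt g' (g'' s) s)
    (hosc : ∀ s ∈ Icc (0 : ℝ) 1, ∀ r ∈ Icc (0 : ℝ) 1, ‖g'' s - g'' r‖ ≤ L) :
    ‖g 1 - g 0 - (1 / 2 : ℝ) • (g' 0 + g' 1)‖ ≤ L / 2 := by
  have hderiv : ∀ s, HasDerivAt (fun s => g s - (s / 2) • (g' 0 + g' s))
      ((1 / 2 : ℝ) • (g' s - g' 0 - s • g'' s)) s := by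
    intro s
    refine ((hg s).sub (((hasDerivAt_id s).div_const 2).smul ((hg' s).const_add (g' 0))))
      |>.congr_deriv ?_
    simp only [id, smul_sub, smul_add, smul_smul]
    module
  have hbound : ∀ s ∈ Icc (0 : ℝ) 1, ‖(1 / 2 : ℝ) • (g' s - g' 0 - s • g'' s)‖ ≤ L / 2 := by
    intro s hs
    have hL : 0 ≤ L := (norm_nonneg _).trans (hosc s hs s hs)
    rw [norm_smul, Real.norm_of_nonneg (by norm_num)]
    nlinarith [norm_sub_sub_smul_le_of_hasDerivAt hg' hosc hs, hs.2]
  have hmvt := Convex.norm_image_sub_le_of_norm_hasDerivWithin_le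
    (fun s _ => (hderiv s).hasDerivWithinAt)
    hbound (convex_Icc 0 1) (left_mem_Icc.mpr zero_le_one) (right_mem_Icc.mpr zero_le_one)
  convert hmvt using 2
  · simp only [zero_div, zero_smul, sub_zero]
    abel
  · norm_num

end Trapezoid

section Hessian

variable {E G : Type*} [NormedAddCommGroup E] [NormedSpace ℝ E] [NormedAddCommGroup G]
  [NormedSpace ℝ G]

theorem norm_fderiv_fderiv_apply_sub_le (F : E → G) (a b v : E) :
    ‖fderiv ℝ (fderiv ℝ F) a v v - fderiv ℝ (fderiv ℝ F) b v v‖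
      ≤ ‖iteratedFDeriv ℝ 2 F a - iteratedFDeriv ℝ 2 F b‖ * ‖v‖ ^ 2 := by
  have hle := (iteratedFDeriv ℝ 2 F a - iteratedFDeriv ℝ 2 F b).le_opNorm ![v, v]
  simpa [iteratedFDeriv_two_apply, Fin.prod_univ_two, sq] using hle

theorem norm_trapezoid_fderiv_sub_le {F : E → G} (hF : ContDiff ℝ 2 F) {α C : ℝ} (hα : 0 ≤ α)
    (hC : 0 ≤ C)
    (hH : ∀ x y : E, ‖iteratedFDeriv ℝ 2 F x - iteratedFDeriv ℝ 2 F y‖ ≤ C * ‖x - y‖ ^ α)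
    (x y : E) :
    ‖F y - F x - (1 / 2 : ℝ) • (fderiv ℝ F x (y - x) + fderiv ℝ F y (y - x))‖
      ≤ C * ‖y - x‖ ^ (2 + α) / 2 := by
  set v := y - x
  have hDF : Differentiable ℝ F := hF.differentiable (by norm_num)
  have hD2F : Differentiable ℝ (fderiv ℝ F) :=
    (hF.fderiv_right (m := 1) (by norm_num)).differentiable one_ne_zero
  have hline : ∀ s : ℝ, HasDerivAt (fun s : ℝ => x + s • v) v s := fun s => by
    simpa using ((hasDerivAt_id s).smul_const v).const_add x
  have hosc : ∀ s ∈ Icc (0 : ℝ) 1, ∀ r ∈ Icc (0 : ℝ) 1,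
      ‖fderiv ℝ (fderiv ℝ F) (x + s • v) v v - fderiv ℝ (fderiv ℝ F) (x + r • v) v v‖
        ≤ C * ‖v‖ ^ (2 + α) := by
    intro s hs r hr
    have hsr : |s - r| ≤ 1 :=
      abs_sub_le_iff.mpr ⟨by linarith [hs.2, hr.1], by linarith [hs.1, hr.2]⟩
    calc _ ≤ C * ‖(x + s • v) - (x + r • v)‖ ^ α * ‖v‖ ^ 2 :=
          (norm_fderiv_fderiv_apply_sub_le F _ _ v).trans (by gcongr; exact hH _ _)
      _ = C * |s - r| ^ α * (‖v‖ ^ (2 : ℝ) * ‖v‖ ^ α) := by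
          rw [add_sub_add_left_eq_sub, ← sub_smul, norm_smul, Real.norm_eq_abs,
            Real.mul_rpow (abs_nonneg _) (norm_nonneg _), Real.rpow_two]
          ring
      _ ≤ C * 1 * (‖v‖ ^ (2 : ℝ) * ‖v‖ ^ α) := by
          gcongr
          exact Real.rpow_le_one (abs_nonneg _) hsr hα
      _ = C * ‖v‖ ^ (2 + α) := by
          rw [Real.rpow_add' (norm_nonneg _) (by positivity), mul_one]
  have hg' : ∀ s : ℝ, HasDerivAt (fun s => fderiv ℝ F (x + s • v) v)
      (fderiv ℝ (fderiv ℝ F) (x + s • v) v v) s := fun s => by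
    simpa using ((hD2F _).hasFDerivAt.comp_hasDerivAt s (hline s)).clm_apply (hasDerivAt_const s v)
  have htrap := norm_trapezoid_sub_le (g := fun s => F (x + s • v))
    (fun s => (hDF _).hasFDerivAt.comp_hasDerivAt s (hline s)) hg' hosc
  simpa [v] using htrap

end Hessian

theorem stratonovich_gradient_integral_general {d : ℕ} (T p α : ℝ) (hα : α > max (p - 2) 0)
    (X : ℝ → Fin d → ℝ) (hX : MemVp p 0 T X)
    (F : (Fin d → ℝ) → ℝ) (hF : ContDiff ℝ 2 F)
    (hHolder : ∃ C : ℝ, ∀ x y : Fin d → ℝ,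
      ‖iteratedFDeriv ℝ 2 F x - iteratedFDeriv ℝ 2 F y‖ ≤ C * ‖x - y‖ ^ α) :
    RiemannLimit 0 T
      (fun s t => fderiv ℝ F (X s) (X t - X s) +
        (1 / 2) * (fderiv ℝ F (X t) (X t - X s) - fderiv ℝ F (X s) (X t - X s)))
      (F (X T) - F (X 0)) := by
  obtain ⟨C, hC⟩ := hHolder
  have hα0 : 0 ≤ α := (le_max_right _ _).trans hα.le
  have hpα : p < 2 + α := by linarith [le_max_left (p - 2) 0]
  have hC' : ∀ x y : Fin d → ℝ,
      ‖iteratedFDeriv ℝ 2 F x - iteratedFDeriv ℝ 2 F y‖ ≤ max C 0 * ‖x - y‖ ^ α :=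
    fun x y => (hC x y).trans (by gcongr; exact le_max_left _ _)
  refine RiemannLimit.of_sub_increment (G := fun t => F (X t))
    (hX.riemannLimit_zero_of_norm_le_rpow hpα (by linarith) (K := max C 0 / 2) (by positivity)
      fun s t => ?_)
  calc _ = ‖F (X t) - F (X s) - (1 / 2 : ℝ) •
          (fderiv ℝ F (X s) (X t - X s) + fderiv ℝ F (X t) (X t - X s))‖ := by
        rw [← norm_neg, smul_eq_mul]
        ring_nf
    _ ≤ max C 0 * ‖X t - X s‖ ^ (2 + α) / 2 :=
        norm_trapezoid_fderiv_sub_le hF hα0 (le_max_right _ _) hC' _ _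
    _ = _ := by ring

/-- for `X` of finite `p`-variation (`1 ≤ p < 3`) and `F ∈ C²` with
`α`-Hölder Hessian (`α > max{p−2,0}`), the Stratonovich integral
`∫ DF(X) ∘ dX` exists and equals `F(X_T) − F(X_0)`. -/
theorem stratonovich_gradient_integral {d : ℕ} (T p α : ℝ) (hT : 0 < T)
    (hp : 1 ≤ p) (hp3 : p < 3) (hα : α > max (p - 2) 0)
    (X : ℝ → Fin d → ℝ) (hX : MemVp p 0 T X)
    (F : (Fin d → ℝ) → ℝ) (hF : ContDiff ℝ 2 F)
    (hHolder : ∃ C : ℝ, ∀ x y : Fin d → ℝ,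
      ‖iteratedFDeriv ℝ 2 F x - iteratedFDeriv ℝ 2 F y‖ ≤ C * ‖x - y‖ ^ α) :
    RiemannLimit 0 T
      (fun s t => fderiv ℝ F (X s) (X t - X s) +
        (1 / 2) * (fderiv ℝ F (X t) (X t - X s) - fderiv ℝ F (X s) (X t - X s)))
      (F (X T) - F (X 0)) :=
  stratonovich_gradient_integral_general T p α hα X hX F hF hHolder
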